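/- Let L be a finite-dimensional nilpotent stem Lie algebra over a field k with dim L' = m ≥ 1. Then L is a 2-step nilpotent Camina Lie algebra if and only if L has breadth type (0, m). -/

import Mathlib

/- Common definitions: breadth, breadth type, derived subalgebra, Camina Lie algebras,
nilpotency class, minimal generation, and free nilpotent Lie algebras. -/

open Module

section Defs

variable (k : Type*) [Field k]

/-- The breadth of an element `x` of a Lie algebra: the rank of the adjoint map `ad x`
(equivalently, the codimension of the centralizer of `x`). -/
noncomputable def breadth (L : Type*) [LieRing L] [LieAlgebra k L] (x : L) : ℕ :=
  Module.finrank k (LinearMap.range (LieAlgebra.ad k L x))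

/-- A Lie algebra has breadth type `S` if `S` is exactly the set of breadths of its elements. -/
def HasBreadthType (L : Type*) [LieRing L] [LieAlgebra k L] (S : Set ℕ) : Prop :=
  Set.range (breadth k L) = S

/-- The derived subalgebra `L' = [L, L]` as a Lie ideal. -/
abbrev derivedIdeal (L : Type*) [LieRing L] [LieAlgebra k L] : LieIdeal k L :=
  ⁅(⊤ : LieIdeal k L), (⊤ : LieIdeal k L)⁆

lemma lie_mem_derivedIdeal (L : Type*) [LieRing L] [LieAlgebra k L] (x y : L) :
    ⁅x, y⁆ ∈ derivedIdeal k L :=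
  LieSubmodule.lie_mem_lie (LieSubmodule.mem_top x) (LieSubmodule.mem_top y)

/-- A Camina Lie algebra: `[x, L] = L'` for every `x ∈ L \ L'`. -/
def IsCamina (L : Type*) [LieRing L] [LieAlgebra k L] : Prop :=
  ∀ x : L, x ∉ derivedIdeal k L →
    LinearMap.range (LieAlgebra.ad k L x) = (derivedIdeal k L).toSubmodule

/-- A Lie algebra is nilpotent of class exactly `c`. -/
def IsNilpotentOfClass (L : Type*) [LieRing L] [LieAlgebra k L] (c : ℕ) : Prop :=
  LieModule.lowerCentralSeries k L L c = ⊥ ∧ ∀ b < c, LieModule.lowerCentralSeries k L L b ≠ ⊥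

/-- A Lie algebra is minimally generated by `n` elements: some `n` elements generate it
and no fewer elements generate it. -/
def MinimallyGenerated (L : Type*) [LieRing L] [LieAlgebra k L] (n : ℕ) : Prop :=
  (∃ s : Finset L, s.card = n ∧ LieSubalgebra.lieSpan k L ↑s = ⊤) ∧
  ∀ s : Finset L, LieSubalgebra.lieSpan k L ↑s = ⊤ → n ≤ s.card

/-- The free `c`-step nilpotent Lie algebra on `n` generators: the quotient of the free
Lie algebra on `n` generators by the `(c+1)`-st term `γ_{c+1}` of its lower central series. -/
abbrev FreeNilp (c n : ℕ) :=
  FreeLieAlgebra k (Fin n) ⧸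
    LieModule.lowerCentralSeries k (FreeLieAlgebra k (Fin n)) (FreeLieAlgebra k (Fin n)) c

/-- The canonical generators of the free `c`-step nilpotent Lie algebra on `n` generators. -/
noncomputable def gen (c n : ℕ) (i : Fin n) : FreeNilp k c n :=
  LieSubmodule.Quotient.mk
    (N := LieModule.lowerCentralSeries k (FreeLieAlgebra k (Fin n)) (FreeLieAlgebra k (Fin n)) c)
    (FreeLieAlgebra.of k i)

end Defs

/-! Breadth zero means central, and `[x, L] ⊆ L'` always, so `x` has breadth `dim L'` exactly
when `[x, L] = L'`; breadth type `(0, dim L')` thus says that `[x, L] = L'` for every non-central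
`x`. A non-central `z ∈ L'` would give `L' = [z, L] ⊆ [L, L']`, impossible in a nilpotent algebra
unless `L' = 0`. So `L' ⊆ Z(L)`, i.e. `L` is 2-step nilpotent, and the stem condition turns
"non-central" into "outside `L'`", which is the Camina condition. -/

section Breadth

variable {k : Type*} [Field k] {L : Type*} [LieRing L] [LieAlgebra k L]

lemma breadth_eq_zero_iff [FiniteDimensional k L] (x : L) :
    breadth k L x = 0 ↔ x ∈ LieAlgebra.center k L := by
  rw [breadth, Submodule.finrank_eq_zero, LinearMap.range_eq_bot,
    ← LieAlgebra.self_module_ker_eq_center, LieModule.mem_ker, LinearMap.ext_iff]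
  rfl

lemma breadth_zero [FiniteDimensional k L] : breadth k L 0 = 0 :=
  (breadth_eq_zero_iff 0).mpr (zero_mem _)

lemma range_ad_le_derivedIdeal (x : L) :
    LinearMap.range (LieAlgebra.ad k L x) ≤ (derivedIdeal k L).toSubmodule := by
  rintro _ ⟨y, rfl⟩
  exact lie_mem_derivedIdeal k L x y

lemma range_ad_eq_derivedIdeal_iff [FiniteDimensional k L] (x : L) :
    LinearMap.range (LieAlgebra.ad k L x) = (derivedIdeal k L).toSubmodule ↔
      breadth k L x = finrank k (derivedIdeal k L) :=
  ⟨fun h => by rw [breadth, h]; rfl,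
    Submodule.eq_of_le_of_finrank_eq (range_ad_le_derivedIdeal x)⟩

end Breadth

lemma LieSubmodule.eq_bot_of_le_lie_top {R L M : Type*} [CommRing R] [LieRing L] [LieAlgebra R L]
    [AddCommGroup M] [Module R M] [LieRingModule L M] [LieModule R L M]
    [LieModule.IsNilpotent L M]
    {N : LieSubmodule R L M} (h : N ≤ ⁅(⊤ : LieIdeal R L), N⁆) : N = ⊥ := by
  have le_lcs : ∀ n, N ≤ LieModule.lowerCentralSeries R L M n := by
    intro n
    induction n with
    | zero => exact le_top
    | succ n ih =>
      rw [LieModule.lowerCentralSeries_succ]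
      exact h.trans (LieSubmodule.mono_lie_right _ ih)
  obtain ⟨n, hn⟩ := LieModule.IsNilpotent.nilpotent R L M
  exact le_bot_iff.mp (hn ▸ le_lcs n)

section LowerCentralSeries

variable {k : Type*} [Field k] {L : Type*} [LieRing L] [LieAlgebra k L]

lemma lowerCentralSeries_one_eq_derivedIdeal :
    LieModule.lowerCentralSeries k L L 1 = derivedIdeal k L := rfl

lemma lowerCentralSeries_two_eq_bot_iff :
    LieModule.lowerCentralSeries k L L 2 = ⊥ ↔ derivedIdeal k L ≤ LieAlgebra.center k L := by
  rw [LieModule.lowerCentralSeries_succ, lowerCentralSeries_one_eq_derivedIdeal,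
    LieSubmodule.lie_eq_bot_iff]
  refine ⟨fun h z hz => ?_, fun h y _ z hz => ?_⟩
  · exact (LieModule.mem_maxTrivSubmodule k L L z).mpr fun y => h y (LieSubmodule.mem_top y) z hz
  · exact (LieModule.mem_maxTrivSubmodule k L L z).mp (h hz) y

lemma isNilpotentOfClass_two_iff :
    IsNilpotentOfClass k L 2 ↔
      derivedIdeal k L ≤ LieAlgebra.center k L ∧ derivedIdeal k L ≠ ⊥ := by
  rw [IsNilpotentOfClass, lowerCentralSeries_two_eq_bot_iff, Nat.forall_lt_succ_right,
    Nat.forall_lt_succ_right, LieModule.lowerCentralSeries_zero,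
    lowerCentralSeries_one_eq_derivedIdeal]
  simp only [Nat.not_lt_zero, IsEmpty.forall_iff, forall_const, true_and]
  refine and_congr_right fun _ => ⟨fun h => h.2, fun h => ⟨fun htop => h ?_, h⟩⟩
  exact eq_bot_iff.mpr (htop ▸ le_top)

end LowerCentralSeries

section Nilpotent

variable {k : Type*} [Field k] {L : Type*} [LieRing L] [LieAlgebra k L] [LieRing.IsNilpotent L]

lemma derivedIdeal_ne_top_of_ne_bot (h : derivedIdeal k L ≠ ⊥) : derivedIdeal k L ≠ ⊤ := by
  intro htop
  apply h
  rw [htop]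
  exact LieSubmodule.eq_bot_of_le_lie_top htop.ge

lemma derivedIdeal_le_center_of_forall_range_ad
    (h : ∀ x ∉ LieAlgebra.center k L,
      LinearMap.range (LieAlgebra.ad k L x) = (derivedIdeal k L).toSubmodule) :
    derivedIdeal k L ≤ LieAlgebra.center k L := by
  intro z hz
  by_contra hzc
  have hle : derivedIdeal k L ≤ ⁅(⊤ : LieIdeal k L), derivedIdeal k L⁆ := by
    intro w hw
    rw [← LieSubmodule.mem_toSubmodule, ← h z hzc] at hw
    obtain ⟨u, rfl⟩ := hw
    rw [LieAlgebra.ad_apply, ← lie_skew]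
    exact neg_mem (LieSubmodule.lie_mem_lie (LieSubmodule.mem_top u) hz)
  have hz0 : z = 0 := (LieSubmodule.mem_bot z).mp (LieSubmodule.eq_bot_of_le_lie_top hle ▸ hz)
  exact hzc (hz0 ▸ zero_mem _)

end Nilpotent

lemma hasBreadthType_pair_iff {k : Type*} [Field k] {L : Type*} [LieRing L] [LieAlgebra k L]
    [FiniteDimensional k L] (m : ℕ) :
    HasBreadthType k L {0, m} ↔
      (∀ x, breadth k L x = 0 ∨ breadth k L x = m) ∧ ∃ x, breadth k L x = m := by
  refine ⟨fun h => ⟨fun x => h.subset ⟨x, rfl⟩, h.superset (by simp)⟩, ?_⟩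
  rintro ⟨hall, x, hx⟩
  refine subset_antisymm (Set.range_subset_iff.mpr hall) ?_
  rintro _ (rfl | rfl)
  exacts [⟨0, breadth_zero⟩, ⟨x, hx⟩]

/-- a finite-dimensional nilpotent stem Lie algebra with `dim L' = m ≥ 1` is a
2-step nilpotent Camina Lie algebra iff it has breadth type `(0, m)`. -/
theorem stem_camina_iff_breadth_type
    (k : Type*) [Field k] (L : Type*) [LieRing L] [LieAlgebra k L]
    [FiniteDimensional k L] [LieRing.IsNilpotent L]
    (hstem : LieAlgebra.center k L ≤ derivedIdeal k L)
    (m : ℕ) (hm : 1 ≤ m) (hdim : finrank k (derivedIdeal k L) = m) :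
    (IsNilpotentOfClass k L 2 ∧ IsCamina k L) ↔ HasBreadthType k L {0, m} := by
  subst hdim
  have hD : derivedIdeal k L ≠ ⊥ := by
    intro h
    rw [h] at hm
    change 1 ≤ finrank k (⊥ : LieIdeal k L).toSubmodule at hm
    simp at hm
  rw [isNilpotentOfClass_two_iff, hasBreadthType_pair_iff]
  constructor
  · rintro ⟨⟨hcen, -⟩, hcam⟩
    obtain ⟨x, hx⟩ := SetLike.exists_not_mem_of_ne_top _ (derivedIdeal_ne_top_of_ne_bot hD)
    refine ⟨fun y => ?_, x, (range_ad_eq_derivedIdeal_iff x).mp (hcam x hx)⟩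
    by_cases hy : y ∈ derivedIdeal k L
    · exact .inl ((breadth_eq_zero_iff y).mpr (hcen hy))
    · exact .inr ((range_ad_eq_derivedIdeal_iff y).mp (hcam y hy))
  · rintro ⟨hall, -⟩
    have hrange : ∀ x ∉ LieAlgebra.center k L,
        LinearMap.range (LieAlgebra.ad k L x) = (derivedIdeal k L).toSubmodule :=
      fun x hx => (range_ad_eq_derivedIdeal_iff x).mpr
        ((hall x).resolve_left (mt (breadth_eq_zero_iff x).mp hx))
    exact ⟨⟨derivedIdeal_le_center_of_forall_range_ad hrange, hD⟩,
      fun x hx => hrange x (mt (@hstem x) hx)⟩
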